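/- For the given independent sequence, the fourth-moment condition of the non-convergence corollary fails: Var(A_n²) = n^{-4}·(∑_{t=1}^n (t⁴ − t²) + 4·∑_{1 ≤ t < s ≤ n} t·s), so Var(A_n²)/n → 1/5 as n → ∞ (in particular Var(A_n²) → ∞), while V_n²/n⁴ = (n(n+1)/2)²/n⁴ → 1/4; hence Var(A_n²) is not O(V_n²/n⁴). -/

import Mathlib

open MeasureTheory ProbabilityTheory Filter Finset
open scoped ENNReal

variable {Ω : Type*} [MeasureSpace Ω]

/-- Covariance of two real random variables. -/
noncomputable def cov (X Y : Ω → ℝ) : ℝ :=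
  ∫ ω, (X ω - ∫ x, X x) * (Y ω - ∫ x, Y x)

/-- Time average `A_n = (1/n) ∑_{t=1}^n X_t`. -/
noncomputable def timeAvg (X : ℕ → Ω → ℝ) (n : ℕ) (ω : Ω) : ℝ :=
  (∑ t ∈ Icc 1 n, X t ω) / n

/-- Summed covariance `V_n = ∑_{t=1}^n ∑_{s=1}^n Cov(X_t, X_s)`. -/
noncomputable def sumCov (X : ℕ → Ω → ℝ) (n : ℕ) : ℝ :=
  ∑ t ∈ Icc 1 n, ∑ s ∈ Icc 1 n, cov (X t) (X s)

/-- The example sequence: mutually independent random variables with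
`P(X_t = t^{3/2}) = P(X_t = −t^{3/2}) = 1/(2t²)` and `P(X_t = 0) = 1 − 1/t²`. -/
def ExampleSeq (X : ℕ → Ω → ℝ) : Prop :=
  (∀ t, Measurable (X t)) ∧
  iIndepFun X ℙ ∧
  ∀ t, 1 ≤ t →
    ℙ {ω | X t ω = (t : ℝ) ^ ((3 : ℝ) / 2)} = 1 / (2 * (t : ℝ≥0∞) ^ 2) ∧
    ℙ {ω | X t ω = -((t : ℝ) ^ ((3 : ℝ) / 2))} = 1 / (2 * (t : ℝ≥0∞) ^ 2) ∧
    ℙ {ω | X t ω = 0} = 1 - 1 / (t : ℝ≥0∞) ^ 2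

section Aux
variable [IsProbabilityMeasure (ℙ : Measure Ω)] {X : ℕ → Ω → ℝ}

noncomputable def aa (t : ℕ) : ℝ := (t:ℝ) ^ ((3:ℝ)/2)

lemma one_le_aa {t : ℕ} (ht : 1 ≤ t) : 1 ≤ aa t :=
  Real.one_le_rpow (by exact_mod_cast ht) (by norm_num)

lemma aa_sq (t : ℕ) : aa t ^ 2 = (t:ℝ) ^ 3 := by
  have h0 : (0:ℝ) ≤ t := Nat.cast_nonneg t
  calc aa t ^ 2 = ((t:ℝ) ^ ((3:ℝ)/2)) ^ ((2:ℕ):ℝ) := by rw [Real.rpow_natCast]; rfl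
    _ = (t:ℝ) ^ (((3:ℝ)/2) * ((2:ℕ):ℝ)) := (Real.rpow_mul h0 _ _).symm
    _ = (t:ℝ) ^ ((3:ℕ):ℝ) := by norm_num
    _ = (t:ℝ) ^ 3 := Real.rpow_natCast _ _




lemma union_full (hX : ExampleSeq X) {t : ℕ} (ht : 1 ≤ t) :
    ∀ᵐ ω, X t ω = aa t ∨ X t ω = -aa t ∨ X t ω = 0 := by
  obtain ⟨hm, -, hd⟩ := hX
  obtain ⟨h1, h2, h3⟩ := hd t ht
  have ha : (1:ℝ) ≤ aa t := one_le_aa ht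
  rw [show (t:ℝ)^((3:ℝ)/2) = aa t from rfl] at h1 h2
  set A := {ω | X t ω = aa t}
  set B := {ω | X t ω = -aa t}
  set C := {ω | X t ω = 0}
  have mA : MeasurableSet A := (hm t) (measurableSet_singleton (aa t))
  have mB : MeasurableSet B := (hm t) (measurableSet_singleton (-aa t))
  have mC : MeasurableSet C := (hm t) (measurableSet_singleton 0)
  have dAB : Disjoint A B := by
    rw [Set.disjoint_left]; intro ω hω1 hω2
    simp only [A, B, Set.mem_setOf_eq] at hω1 hω2
    linarith [hω1 ▸ hω2]
  have dABC : Disjoint (A ∪ B) C := by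
    rw [Set.disjoint_left]; intro ω hω1 hω2
    simp only [A, B, C, Set.mem_setOf_eq, Set.mem_union] at hω1 hω2
    rcases hω1 with h | h <;> rw [hω2] at h <;> linarith
  have htn : (t : ℝ≥0∞) ≠ 0 := Nat.cast_ne_zero.mpr (by omega)
  have ht2 : (t : ℝ≥0∞) ^ 2 ≠ 0 := pow_ne_zero 2 htn
  have ht2' : (t : ℝ≥0∞) ^ 2 ≠ ⊤ := ENNReal.pow_ne_top (ENNReal.natCast_ne_top t)
  have h1le : (1 : ℝ≥0∞) ≤ (t : ℝ≥0∞) ^ 2 := by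
    exact_mod_cast Nat.one_le_pow 2 t (by omega)
  have hle : 1 / (t : ℝ≥0∞) ^ 2 ≤ 1 := ENNReal.div_le_of_le_mul (by simpa using h1le)
  have hsum : ℙ (A ∪ B ∪ C) = 1 := by
    rw [measure_union dABC mC, measure_union dAB mB, h1, h2, h3]
    have e1 : 1 / (2 * (t : ℝ≥0∞) ^ 2) + 1 / (2 * (t : ℝ≥0∞) ^ 2) = 1 / (t : ℝ≥0∞) ^ 2 := by
      rw [ENNReal.div_add_div_same, show (1:ℝ≥0∞) + 1 = 2 * 1 by norm_num,
        ENNReal.mul_div_mul_left _ _ (by norm_num) (by norm_num)]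
    rw [e1, add_tsub_cancel_of_le hle]
  have : ℙ (A ∪ B ∪ C)ᶜ = 0 := by
    rw [measure_compl ((mA.union mB).union mC) (measure_ne_top _ _), hsum, measure_univ, tsub_self]
  refine (MeasureTheory.ae_iff).2 ?_
  convert this using 2
  ext ω
  simp only [A, B, C, Set.mem_setOf_eq, Set.mem_compl_iff, Set.mem_union]
  tauto

lemma integral_comp (hX : ExampleSeq X) {t : ℕ} (ht : 1 ≤ t) {f : ℝ → ℝ} (hf : Measurable f) :
    ∫ ω, f (X t ω) =
      (f (aa t) + f (-aa t)) * (2 * (t:ℝ)^2)⁻¹ + f 0 * (1 - ((t:ℝ)^2)⁻¹) := by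
  have hae := union_full hX ht
  have hm := hX.1
  obtain ⟨h1, h2, h3⟩ := hX.2.2 t ht
  have ha : (1:ℝ) ≤ aa t := one_le_aa ht
  rw [show (t:ℝ)^((3:ℝ)/2) = aa t from rfl] at h1 h2
  set A := {ω | X t ω = aa t} with hAdef
  set B := {ω | X t ω = -aa t} with hBdef
  set C := {ω | X t ω = 0} with hCdef
  have mA : MeasurableSet A := (hm t) (measurableSet_singleton (aa t))
  have mB : MeasurableSet B := (hm t) (measurableSet_singleton (-aa t))
  have mC : MeasurableSet C := (hm t) (measurableSet_singleton 0)
  have heq : (fun ω => f (X t ω)) =ᵐ[ℙ]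
      (fun ω => A.indicator (fun _ => f (aa t)) ω + B.indicator (fun _ => f (-aa t)) ω
        + C.indicator (fun _ => f 0) ω) := by
    filter_upwards [hae] with ω hω
    rcases hω with h | h | h
    · have hωA : ω ∈ A := h
      have hωB : ω ∉ B := by simp only [hBdef, Set.mem_setOf_eq, h]; intro hc; linarith
      have hωC : ω ∉ C := by simp only [hCdef, Set.mem_setOf_eq, h]; intro hc; linarith
      simp [Set.indicator_of_mem hωA, Set.indicator_of_notMem hωB,
        Set.indicator_of_notMem hωC, h]
    · have hωB : ω ∈ B := h
      have hωA : ω ∉ A := by simp only [hAdef, Set.mem_setOf_eq, h]; intro hc; linarith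
      have hωC : ω ∉ C := by simp only [hCdef, Set.mem_setOf_eq, h]; intro hc; linarith
      simp [Set.indicator_of_mem hωB, Set.indicator_of_notMem hωA,
        Set.indicator_of_notMem hωC, h]
    · have hωC : ω ∈ C := h
      have hωA : ω ∉ A := by simp only [hAdef, Set.mem_setOf_eq, h]; intro hc; linarith
      have hωB : ω ∉ B := by simp only [hBdef, Set.mem_setOf_eq, h]; intro hc; linarith
      simp [Set.indicator_of_mem hωC, Set.indicator_of_notMem hωA,
        Set.indicator_of_notMem hωB, h]
  rw [integral_congr_ae heq]
  have iA : Integrable (A.indicator (fun _ => f (aa t))) ℙ :=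
    (integrable_const (f (aa t))).indicator mA
  have iB : Integrable (B.indicator (fun _ => f (-aa t))) ℙ :=
    (integrable_const (f (-aa t))).indicator mB
  have iC : Integrable (C.indicator (fun _ => f 0)) ℙ :=
    (integrable_const (f 0)).indicator mC
  have iAB : Integrable (fun a => A.indicator (fun _ => f (aa t)) a
      + B.indicator (fun _ => f (-aa t)) a) ℙ := iA.add iB
  rw [integral_add iAB iC, integral_add iA iB,
    integral_indicator_const _ mA, integral_indicator_const _ mB, integral_indicator_const _ mC,
    measureReal_def, measureReal_def, measureReal_def, h1, h2, h3]
  have htR : ((t:ℝ)^2) ≠ 0 := by positivity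
  have htn : (t : ℝ≥0∞) ≠ 0 := Nat.cast_ne_zero.mpr (by omega)
  have ht2 : (t : ℝ≥0∞) ^ 2 ≠ 0 := pow_ne_zero 2 htn
  have ht2' : (t : ℝ≥0∞) ^ 2 ≠ ⊤ := ENNReal.pow_ne_top (ENNReal.natCast_ne_top t)
  have h1le : (1 : ℝ≥0∞) ≤ (t : ℝ≥0∞) ^ 2 := by
    exact_mod_cast Nat.one_le_pow 2 t (by omega)
  have hle : 1 / (t : ℝ≥0∞) ^ 2 ≤ 1 := ENNReal.div_le_of_le_mul (by simpa using h1le)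
  have e1 : (1 / (2 * (t : ℝ≥0∞) ^ 2)).toReal = (2 * (t:ℝ)^2)⁻¹ := by
    rw [ENNReal.toReal_div, ENNReal.toReal_mul]
    simp
  have e2 : ((1:ℝ≥0∞) - 1 / (t : ℝ≥0∞) ^ 2).toReal = 1 - ((t:ℝ)^2)⁻¹ := by
    rw [ENNReal.toReal_sub_of_le hle (by norm_num), ENNReal.toReal_div]
    simp
  rw [e1, e2]
  simp only [smul_eq_mul]
  ring

lemma mom1 (hX : ExampleSeq X) {t : ℕ} (ht : 1 ≤ t) : ∫ ω, X t ω = 0 := by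
  have h := integral_comp hX ht (f := fun x => x) measurable_id
  simpa using h

lemma mom2 (hX : ExampleSeq X) {t : ℕ} (ht : 1 ≤ t) : ∫ ω, (X t ω)^2 = (t:ℝ) := by
  have h := integral_comp hX ht (f := fun x => x^2) (measurable_id.pow_const 2)
  have htR : ((t:ℝ)) ≠ 0 := by positivity
  rw [h]; beta_reduce
  rw [show (-aa t)^2 = aa t^2 from by ring, aa_sq]
  field_simp
  ring

lemma mom3 (hX : ExampleSeq X) {t : ℕ} (ht : 1 ≤ t) : ∫ ω, (X t ω)^3 = 0 := by
  have h := integral_comp hX ht (f := fun x => x^3) (measurable_id.pow_const 3)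
  rw [h]
  ring

lemma mom4 (hX : ExampleSeq X) {t : ℕ} (ht : 1 ≤ t) : ∫ ω, (X t ω)^4 = (t:ℝ)^4 := by
  have h := integral_comp hX ht (f := fun x => x^4) (measurable_id.pow_const 4)
  have htR : ((t:ℝ)) ≠ 0 := by positivity
  have h4 : aa t ^ 4 = (t:ℝ)^6 := by
    rw [show (4:ℕ) = 2*2 from rfl, pow_mul, aa_sq, ← pow_mul]
  rw [h]; beta_reduce
  rw [show (-aa t)^4 = aa t^4 from by ring, h4]
  field_simp
  ring

lemma abs_ae_le (hX : ExampleSeq X) {t : ℕ} (ht : 1 ≤ t) : ∀ᵐ ω, |X t ω| ≤ aa t := by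
  have ha : (1:ℝ) ≤ aa t := one_le_aa ht
  filter_upwards [union_full hX ht] with ω hω
  rcases hω with h | h | h
  · rw [h, abs_of_nonneg (by linarith)]
  · rw [h, abs_neg, abs_of_nonneg (by linarith)]
  · rw [h]; simp; linarith

lemma int_bdd {f : Ω → ℝ} (hf : Measurable f) {C : ℝ} (h : ∀ᵐ ω, |f ω| ≤ C) :
    Integrable f ℙ :=
  (integrable_const C).mono' hf.aestronglyMeasurable (by simpa [Real.norm_eq_abs] using h)

lemma expand_moments {S Y : Ω → ℝ} (hS : Measurable S) (hY : Measurable Y) {B c : ℝ}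
    (hSB : ∀ᵐ ω, |S ω| ≤ B) (hYB : ∀ᵐ ω, |Y ω| ≤ c) (hind : IndepFun S Y ℙ) :
    (∫ ω, (S ω + Y ω)) = (∫ ω, S ω) + (∫ ω, Y ω) ∧
    (∫ ω, (S ω + Y ω)^2) = (∫ ω, (S ω)^2) + 2 * (∫ ω, S ω) * (∫ ω, Y ω) + (∫ ω, (Y ω)^2) ∧
    (∫ ω, (S ω + Y ω)^3) = (∫ ω, (S ω)^3) + 3 * (∫ ω, (S ω)^2) * (∫ ω, Y ω)
      + 3 * (∫ ω, S ω) * (∫ ω, (Y ω)^2) + (∫ ω, (Y ω)^3) ∧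
    (∫ ω, (S ω + Y ω)^4) = (∫ ω, (S ω)^4) + 4 * (∫ ω, (S ω)^3) * (∫ ω, Y ω)
      + 6 * (∫ ω, (S ω)^2) * (∫ ω, (Y ω)^2) + 4 * (∫ ω, S ω) * (∫ ω, (Y ω)^3)
      + (∫ ω, (Y ω)^4) := by
  have iS : ∀ j : ℕ, Integrable (fun ω => S ω ^ j) ℙ := fun j =>
    int_bdd (hS.pow_const j) (by
      filter_upwards [hSB] with ω h
      calc |S ω ^ j| = |S ω| ^ j := by rw [abs_pow]
        _ ≤ (max B 0) ^ j := by
            exact pow_le_pow_left₀ (abs_nonneg _) (h.trans (le_max_left _ _)) j)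
  have iY : ∀ k : ℕ, Integrable (fun ω => Y ω ^ k) ℙ := fun k =>
    int_bdd (hY.pow_const k) (by
      filter_upwards [hYB] with ω h
      calc |Y ω ^ k| = |Y ω| ^ k := by rw [abs_pow]
        _ ≤ (max c 0) ^ k := by
            exact pow_le_pow_left₀ (abs_nonneg _) (h.trans (le_max_left _ _)) k)
  have iSY : ∀ j k : ℕ, Integrable (fun ω => S ω ^ j * Y ω ^ k) ℙ := fun j k =>
    int_bdd ((hS.pow_const j).mul (hY.pow_const k)) (by
      filter_upwards [hSB, hYB] with ω h1 h2
      calc |S ω ^ j * Y ω ^ k| = |S ω| ^ j * |Y ω| ^ k := by rw [abs_mul, abs_pow, abs_pow]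
        _ ≤ (max B 0) ^ j * (max c 0) ^ k := by
            exact mul_le_mul (pow_le_pow_left₀ (abs_nonneg _) (h1.trans (le_max_left _ _)) j)
              (pow_le_pow_left₀ (abs_nonneg _) (h2.trans (le_max_left _ _)) k)
              (by positivity) (by positivity))
  have hfac : ∀ j k : ℕ, ∫ ω, S ω ^ j * Y ω ^ k = (∫ ω, S ω ^ j) * (∫ ω, Y ω ^ k) := by
    intro j k
    exact (hind.comp (measurable_id.pow_const j) (measurable_id.pow_const k)).integral_mul_eq_mul_integral
      (hS.pow_const j).aestronglyMeasurable (hY.pow_const k).aestronglyMeasurable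
  have iS1 : Integrable S ℙ := by simpa using iS 1
  have iY1 : Integrable Y ℙ := by simpa using iY 1
  refine ⟨integral_add iS1 iY1, ?_, ?_, ?_⟩
  · rw [show (fun ω => (S ω + Y ω)^2)
        = (fun ω => S ω^2 + (2*(S ω^1 * Y ω^1) + Y ω^2)) from funext fun ω => by ring]
    have I2 : Integrable (fun ω => 2*(S ω^1 * Y ω^1) + Y ω^2) ℙ :=
      ((iSY 1 1).const_mul 2).add (iY 2)
    rw [integral_add (iS 2) I2,
      integral_add ((iSY 1 1).const_mul 2) (iY 2), integral_const_mul _ _, hfac 1 1]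
    simp only [pow_one]
    ring
  · rw [show (fun ω => (S ω + Y ω)^3)
        = (fun ω => S ω^3 + (3*(S ω^2 * Y ω^1) + (3*(S ω^1 * Y ω^2) + Y ω^3)))
        from funext fun ω => by ring]
    have I32 : Integrable (fun ω => 3*(S ω^1 * Y ω^2) + Y ω^3) ℙ :=
      ((iSY 1 2).const_mul 3).add (iY 3)
    have I31 : Integrable (fun ω => 3*(S ω^2 * Y ω^1) + (3*(S ω^1 * Y ω^2) + Y ω^3)) ℙ :=
      ((iSY 2 1).const_mul 3).add I32
    rw [integral_add (iS 3) I31,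
      integral_add ((iSY 2 1).const_mul 3) I32,
      integral_add ((iSY 1 2).const_mul 3) (iY 3),
      integral_const_mul _ _, integral_const_mul _ _, hfac 2 1, hfac 1 2]
    simp only [pow_one]
    ring
  · rw [show (fun ω => (S ω + Y ω)^4)
        = (fun ω => S ω^4 + (4*(S ω^3 * Y ω^1) + (6*(S ω^2 * Y ω^2)
            + (4*(S ω^1 * Y ω^3) + Y ω^4)))) from funext fun ω => by ring]
    have I43 : Integrable (fun ω => 4*(S ω^1 * Y ω^3) + Y ω^4) ℙ :=
      ((iSY 1 3).const_mul 4).add (iY 4)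
    have I42 : Integrable (fun ω => 6*(S ω^2 * Y ω^2) + (4*(S ω^1 * Y ω^3) + Y ω^4)) ℙ :=
      ((iSY 2 2).const_mul 6).add I43
    have I41 : Integrable (fun ω => 4*(S ω^3 * Y ω^1)
        + (6*(S ω^2 * Y ω^2) + (4*(S ω^1 * Y ω^3) + Y ω^4))) ℙ :=
      ((iSY 3 1).const_mul 4).add I42
    rw [integral_add (iS 4) I41,
      integral_add ((iSY 3 1).const_mul 4) I42,
      integral_add ((iSY 2 2).const_mul 6) I43,
      integral_add ((iSY 1 3).const_mul 4) (iY 4),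
      integral_const_mul _ _, integral_const_mul _ _, integral_const_mul _ _,
      hfac 3 1, hfac 2 2, hfac 1 3]
    simp only [pow_one]
    ring

lemma gauss_sum (n : ℕ) : ∑ t ∈ Icc 1 n, (t:ℝ) = n*(n+1)/2 := by
  induction n with
  | zero => simp
  | succ n ih =>
    rw [Finset.sum_Icc_succ_top (by omega), ih]
    push_cast
    ring

lemma Tstep (n : ℕ) : ∑ t ∈ Icc 1 (n+1), ∑ s ∈ Icc (t+1) (n+1), (t:ℝ)*s
    = (∑ t ∈ Icc 1 n, ∑ s ∈ Icc (t+1) n, (t:ℝ)*s)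
      + (∑ t ∈ Icc 1 n, (t:ℝ)) * (n+1) := by
  rw [Finset.sum_Icc_succ_top (by omega)]
  rw [show Icc ((n:ℕ)+1+1) (n+1) = ∅ from Finset.Icc_eq_empty (by omega)]
  rw [Finset.sum_empty, add_zero]
  have : ∀ t ∈ Icc 1 n, ∑ s ∈ Icc (t+1) (n+1), (t:ℝ)*s
      = (∑ s ∈ Icc (t+1) n, (t:ℝ)*s) + (t:ℝ)*(n+1) := by
    intro t htm
    rw [Finset.sum_Icc_succ_top (by simp at htm; omega)]
    push_cast
    ring
  rw [Finset.sum_congr rfl this, Finset.sum_add_distrib, ← Finset.sum_mul]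

lemma S_meas (hX : ExampleSeq X) (n : ℕ) :
    Measurable (fun ω => ∑ t ∈ Icc 1 n, X t ω) :=
  Finset.measurable_sum _ fun t _ => hX.1 t

lemma S_bdd (hX : ExampleSeq X) (n : ℕ) :
    ∀ᵐ ω, |(∑ t ∈ Icc 1 n, X t ω)| ≤ ∑ t ∈ Icc 1 n, aa t := by
  have h1 : ∀ᵐ ω, ∀ t : ℕ, 1 ≤ t → |X t ω| ≤ aa t := by
    rw [MeasureTheory.ae_all_iff]
    intro t
    by_cases ht : 1 ≤ t
    · filter_upwards [abs_ae_le hX ht] with ω h _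
      exact h
    · filter_upwards with ω h
      exact absurd h ht
  filter_upwards [h1] with ω h
  calc |∑ t ∈ Icc 1 n, X t ω| ≤ ∑ t ∈ Icc 1 n, |X t ω| := Finset.abs_sum_le_sum_abs _ _
    _ ≤ ∑ t ∈ Icc 1 n, aa t := Finset.sum_le_sum fun t htm => h t (by simp at htm; omega)

lemma S_moments (hX : ExampleSeq X) (n : ℕ) :
    (∫ ω, (∑ t ∈ Icc 1 n, X t ω)) = 0 ∧
    (∫ ω, (∑ t ∈ Icc 1 n, X t ω)^2) = ∑ t ∈ Icc 1 n, (t:ℝ) ∧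
    (∫ ω, (∑ t ∈ Icc 1 n, X t ω)^3) = 0 ∧
    (∫ ω, (∑ t ∈ Icc 1 n, X t ω)^4)
      = ∑ t ∈ Icc 1 n, (t:ℝ)^4 + 6 * ∑ t ∈ Icc 1 n, ∑ s ∈ Icc (t+1) n, (t:ℝ)*s := by
  induction n with
  | zero =>
    simp [show Icc 1 0 = (∅ : Finset ℕ) from Finset.Icc_eq_empty (by omega)]
  | succ n ih =>
    obtain ⟨ih1, ih2, ih3, ih4⟩ := ih
    have hsplit' : ∀ ω, ∑ t ∈ Icc 1 (n+1), X t ω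
        = (∑ t ∈ Icc 1 n, X t ω) + X (n+1) ω :=
      fun ω => Finset.sum_Icc_succ_top (by omega) _
    have hindS : IndepFun (fun ω => ∑ t ∈ Icc 1 n, X t ω) (X (n+1)) ℙ := by
      have h := hX.2.1.indepFun_finsetSum_of_notMem hX.1
        (s := Icc 1 n) (i := n+1) (by simp)
      have e : (∑ t ∈ Icc 1 n, X t) = fun ω => ∑ t ∈ Icc 1 n, X t ω :=
        funext fun ω => Finset.sum_apply _ _ _
      rwa [e] at h
    obtain ⟨e1, e2, e3, e4⟩ := expand_moments (S_meas hX n) (hX.1 (n+1))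
      (S_bdd hX n) (abs_ae_le hX (by omega)) hindS
    have m1 := mom1 hX (t := n+1) (by omega)
    have m2 := mom2 hX (t := n+1) (by omega)
    have m3 := mom3 hX (t := n+1) (by omega)
    have m4 := mom4 hX (t := n+1) (by omega)
    refine ⟨?_, ?_, ?_, ?_⟩
    · simp only [hsplit']
      rw [e1, ih1, m1, add_zero]
    · simp only [hsplit']
      rw [e2, ih1, ih2, m1, m2, Finset.sum_Icc_succ_top (by omega : 1 ≤ n+1) (fun t => (t:ℝ))]
      ring
    · simp only [hsplit']
      rw [e3, ih1, ih2, ih3, m1, m2, m3]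
      ring
    · simp only [hsplit']
      rw [e4, ih1, ih2, ih3, ih4, m1, m2, m3, m4,
        Finset.sum_Icc_succ_top (by omega : 1 ≤ n+1) (fun t => (t:ℝ)^4), Tstep]
      push_cast
      ring

lemma cov_diag (hX : ExampleSeq X) {t : ℕ} (ht : 1 ≤ t) : cov (X t) (X t) = (t:ℝ) := by
  unfold cov
  rw [mom1 hX ht]
  simp only [sub_zero]
  rw [show (fun ω => X t ω * X t ω) = fun ω => (X t ω)^2 from funext fun ω => (sq _).symm]
  exact mom2 hX ht

lemma cov_off (hX : ExampleSeq X) {t s : ℕ} (ht : 1 ≤ t) (hs : 1 ≤ s) (hts : t ≠ s) :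
    cov (X t) (X s) = 0 := by
  unfold cov
  rw [mom1 hX ht, mom1 hX hs]
  simp only [sub_zero]
  rw [(hX.2.1.indepFun hts).integral_fun_mul_eq_mul_integral (hX.1 t).aestronglyMeasurable
    (hX.1 s).aestronglyMeasurable, mom1 hX ht, zero_mul]

lemma sumCov_eq (hX : ExampleSeq X) (n : ℕ) : sumCov X n = (n:ℝ)*((n:ℝ)+1)/2 := by
  unfold sumCov
  have hrow : ∀ t ∈ Icc 1 n, ∑ s ∈ Icc 1 n, cov (X t) (X s) = (t:ℝ) := by
    intro t htm
    have ht1 : 1 ≤ t := by simp at htm; omega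
    rw [Finset.sum_eq_single t]
    · exact cov_diag hX ht1
    · intro s hsm hst
      exact cov_off hX ht1 (by simp at hsm; omega) (Ne.symm hst)
    · intro h
      exact absurd htm h
  rw [Finset.sum_congr rfl hrow, gauss_sum]

lemma sq_gauss (n : ℕ) : (∑ t ∈ Icc 1 n, (t:ℝ))^2
    = ∑ t ∈ Icc 1 n, (t:ℝ)^2 + 2 * ∑ t ∈ Icc 1 n, ∑ s ∈ Icc (t+1) n, (t:ℝ)*s := by
  induction n with
  | zero => simp
  | succ n ih =>
    rw [Finset.sum_Icc_succ_top (by omega : 1 ≤ n+1) (fun t => (t:ℝ)),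
      Finset.sum_Icc_succ_top (by omega : 1 ≤ n+1) (fun t => (t:ℝ)^2), Tstep]
    push_cast
    nlinarith [ih]

lemma body_closed (n : ℕ) : (∑ t ∈ Icc 1 n, ((t:ℝ)^4 - (t:ℝ)^2))
      + 4 * ∑ t ∈ Icc 1 n, ∑ s ∈ Icc (t+1) n, (t:ℝ)*s
    = (n:ℝ)^5/5 + (n:ℝ)^4 + (n:ℝ)^3/3 - (n:ℝ)^2 - 8*(n:ℝ)/15 := by
  induction n with
  | zero => simp
  | succ n ih =>
    rw [Finset.sum_Icc_succ_top (by omega : 1 ≤ n+1) (fun t => (t:ℝ)^4 - (t:ℝ)^2), Tstep,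
      gauss_sum]
    push_cast
    push_cast at ih
    nlinarith [ih]

lemma var_A (hX : ExampleSeq X) {n : ℕ} (hn : 1 ≤ n) :
    variance (fun ω => (timeAvg X n ω)^2) ℙ =
      ((n : ℝ) ^ 4)⁻¹ * ((∑ t ∈ Icc 1 n, ((t : ℝ) ^ 4 - (t : ℝ) ^ 2)) +
        4 * ∑ t ∈ Icc 1 n, ∑ s ∈ Icc (t + 1) n, (t : ℝ) * (s : ℝ)) := by
  have hn0 : (n:ℝ) ≠ 0 := by positivity
  have e : (fun ω => (timeAvg X n ω)^2)
      = fun ω => ((n:ℝ)^2)⁻¹ * (∑ t ∈ Icc 1 n, X t ω)^2 := by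
    funext ω
    unfold timeAvg
    rw [div_pow, div_eq_inv_mul]
  rw [e, variance_const_mul]
  have hmem : MemLp (fun ω => (∑ t ∈ Icc 1 n, X t ω)^2) 2 ℙ := by
    apply MemLp.of_bound ((S_meas hX n).pow_const 2).aestronglyMeasurable
      ((∑ t ∈ Icc 1 n, aa t)^2)
    filter_upwards [S_bdd hX n] with ω h
    rw [Real.norm_eq_abs, abs_pow]
    exact pow_le_pow_left₀ (abs_nonneg _) h 2
  rw [variance_eq_sub hmem]
  have epow : (fun ω => (∑ t ∈ Icc 1 n, X t ω)^2)^2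
      = fun ω => (∑ t ∈ Icc 1 n, X t ω)^4 := by
    funext ω
    simp only [Pi.pow_apply]
    ring
  rw [epow]
  obtain ⟨-, h2, -, h4⟩ := S_moments hX n
  rw [show (∫ ω, ((fun ω => (∑ t ∈ Icc 1 n, X t ω)^2) ω)) = ∑ t ∈ Icc 1 n, (t:ℝ) from h2, h4]
  rw [Finset.sum_sub_distrib]
  have hg := sq_gauss n
  have : (((n:ℝ)^2)⁻¹)^2 = ((n:ℝ)^4)⁻¹ := by
    rw [inv_pow, ← pow_mul]
  rw [this]
  nlinarith [sq_gauss n, sq_nonneg ((n:ℝ)^4)⁻¹]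


theorem example_fourth_moment_condition_fails'
    (hX : ExampleSeq X) :
    (∀ n, 1 ≤ n → variance (fun ω => (timeAvg X n ω) ^ 2) ℙ =
      ((n : ℝ) ^ 4)⁻¹ * ((∑ t ∈ Icc 1 n, ((t : ℝ) ^ 4 - (t : ℝ) ^ 2)) +
        4 * ∑ t ∈ Icc 1 n, ∑ s ∈ Icc (t + 1) n, (t : ℝ) * (s : ℝ))) ∧
    Tendsto (fun n : ℕ => variance (fun ω => (timeAvg X n ω) ^ 2) ℙ / (n : ℝ)) atTop
      (nhds (1 / 5)) ∧
    Tendsto (fun n : ℕ => variance (fun ω => (timeAvg X n ω) ^ 2) ℙ) atTop atTop ∧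
    (∀ n, 1 ≤ n → (sumCov X n) ^ 2 / (n : ℝ) ^ 4 =
      ((n : ℝ) * ((n : ℝ) + 1) / 2) ^ 2 / (n : ℝ) ^ 4) ∧
    Tendsto (fun n : ℕ => (sumCov X n) ^ 2 / (n : ℝ) ^ 4) atTop (nhds (1 / 4)) ∧
    ¬ ∃ C : ℝ, ∀ᶠ n : ℕ in atTop,
        variance (fun ω => (timeAvg X n ω) ^ 2) ℙ ≤ C * (sumCov X n) ^ 2 / (n : ℝ) ^ 4 := by
  have hinv : Tendsto (fun n : ℕ => ((n:ℝ))⁻¹) atTop (nhds 0) :=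
    tendsto_inv_atTop_zero.comp tendsto_natCast_atTop_atTop
  have part1 : ∀ n, 1 ≤ n → variance (fun ω => (timeAvg X n ω) ^ 2) ℙ =
      ((n : ℝ) ^ 4)⁻¹ * ((∑ t ∈ Icc 1 n, ((t : ℝ) ^ 4 - (t : ℝ) ^ 2)) +
        4 * ∑ t ∈ Icc 1 n, ∑ s ∈ Icc (t + 1) n, (t : ℝ) * (s : ℝ)) :=
    fun n hn => var_A hX hn
  have part2 : Tendsto (fun n : ℕ => variance (fun ω => (timeAvg X n ω) ^ 2) ℙ / (n : ℝ))
      atTop (nhds (1 / 5)) := by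
    have hg : Tendsto (fun n : ℕ => 1/5 + (n:ℝ)⁻¹ + (1/3)*((n:ℝ)⁻¹)^2 - ((n:ℝ)⁻¹)^3
        - (8/15)*((n:ℝ)⁻¹)^4) atTop (nhds (1/5)) := by
      have base := ((((tendsto_const_nhds (x := (1/5:ℝ))).add hinv).add
        ((hinv.pow 2).const_mul (1/3))).sub (hinv.pow 3)).sub ((hinv.pow 4).const_mul (8/15))
      convert base using 2
      norm_num
    apply hg.congr'
    filter_upwards [eventually_ge_atTop 1] with n hn
    have hn0 : (n:ℝ) ≠ 0 := by positivity
    rw [var_A hX hn, body_closed n]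
    field_simp
  have part3 : Tendsto (fun n : ℕ => variance (fun ω => (timeAvg X n ω) ^ 2) ℙ) atTop atTop := by
    have h := Filter.Tendsto.pos_mul_atTop (by norm_num : (0:ℝ) < 1/5) part2
      tendsto_natCast_atTop_atTop
    apply h.congr'
    filter_upwards [eventually_ge_atTop 1] with n hn
    have hn0 : (n:ℝ) ≠ 0 := by positivity
    rw [div_mul_cancel₀ _ hn0]
  have part4 : ∀ n, 1 ≤ n → (sumCov X n) ^ 2 / (n : ℝ) ^ 4 =
      ((n : ℝ) * ((n : ℝ) + 1) / 2) ^ 2 / (n : ℝ) ^ 4 := by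
    intro n hn
    rw [sumCov_eq hX n]
  have part5 : Tendsto (fun n : ℕ => (sumCov X n) ^ 2 / (n : ℝ) ^ 4) atTop (nhds (1 / 4)) := by
    have hg : Tendsto (fun n : ℕ => (1/2 + (1/2)*(n:ℝ)⁻¹)^2) atTop (nhds (1/4)) := by
      have base := ((tendsto_const_nhds (x := (1/2:ℝ))).add (hinv.const_mul (1/2))).pow 2
      convert base using 2
      norm_num
    apply hg.congr'
    filter_upwards [eventually_ge_atTop 1] with n hn
    have hn0 : (n:ℝ) ≠ 0 := by positivity
    rw [sumCov_eq hX n]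
    field_simp
  refine ⟨part1, part2, part3, part4, part5, ?_⟩
  rintro ⟨C, hC⟩
  have hR : Tendsto (fun n : ℕ => C * (sumCov X n)^2 / (n:ℝ)^4) atTop (nhds (C * (1/4))) := by
    have h := part5.const_mul C
    simpa [mul_div_assoc] using h
  have h1 : ∀ᶠ n : ℕ in atTop, C/4 + 1 ≤ variance (fun ω => (timeAvg X n ω) ^ 2) ℙ :=
    part3.eventually_ge_atTop (C/4+1)
  have h2 : ∀ᶠ n : ℕ in atTop, C * (sumCov X n)^2/(n:ℝ)^4 < C/4 + 1 :=
    hR.eventually_lt_const (by linarith)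
  obtain ⟨n, hn1, hn2, hn3⟩ := (h1.and (h2.and hC)).exists
  linarith


end Aux

/-- The fourth-moment condition fails for the example sequence:
`Var(A_n²) = n⁻⁴(∑_{t=1}^n (t⁴ − t²) + 4∑_{1≤t<s≤n} ts)`, and `Var(A_n²)/n → 1/5`
(so `Var(A_n²) → ∞`), while `V_n²/n⁴ = (n(n+1)/2)²/n⁴ → 1/4`; hence
`Var(A_n²)` is not `O(V_n²/n⁴)`. -/
theorem example_fourth_moment_condition_fails
    [IsProbabilityMeasure (ℙ : Measure Ω)]
    (X : ℕ → Ω → ℝ) (hX : ExampleSeq X) :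
    (∀ n, 1 ≤ n → variance (fun ω => (timeAvg X n ω) ^ 2) ℙ =
      ((n : ℝ) ^ 4)⁻¹ * ((∑ t ∈ Icc 1 n, ((t : ℝ) ^ 4 - (t : ℝ) ^ 2)) +
        4 * ∑ t ∈ Icc 1 n, ∑ s ∈ Icc (t + 1) n, (t : ℝ) * (s : ℝ))) ∧
    Tendsto (fun n : ℕ => variance (fun ω => (timeAvg X n ω) ^ 2) ℙ / (n : ℝ)) atTop
      (nhds (1 / 5)) ∧
    Tendsto (fun n : ℕ => variance (fun ω => (timeAvg X n ω) ^ 2) ℙ) atTop atTop ∧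
    (∀ n, 1 ≤ n → (sumCov X n) ^ 2 / (n : ℝ) ^ 4 =
      ((n : ℝ) * ((n : ℝ) + 1) / 2) ^ 2 / (n : ℝ) ^ 4) ∧
    Tendsto (fun n : ℕ => (sumCov X n) ^ 2 / (n : ℝ) ^ 4) atTop (nhds (1 / 4)) ∧
    ¬ ∃ C : ℝ, ∀ᶠ n : ℕ in atTop,
        variance (fun ω => (timeAvg X n ω) ^ 2) ℙ ≤ C * (sumCov X n) ^ 2 / (n : ℝ) ^ 4 := by
  exact example_fourth_moment_condition_fails' hX
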